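/- Let q, r, p be integers with 2 ≤ q < r, gcd(q, r) = 1, p ≥ 2qr − 1, gcd(p, 2qr) = 1, and gcd(p+2, 2qr) = 1. Let δ_T = #(ℕ \ ⟨q, r⟩) and let S' = ⟨qp, r(p+2)⟩ ⊆ ℕ. Then S' is cofinite and its enumerating function satisfies Γ_{S'}(δ_T + q − 1) = (q−1)r(p+2) and Γ_{S'}(δ_T + r − 1) = (r−1)qp. -/

import Mathlib

/-- The numerical semigroup `⟨x, y⟩ = {i·x + j·y : i, j ∈ ℕ}` as a subset of `ℕ`. -/
def gen2 (x y : ℕ) : Set ℕ := {n | ∃ i j : ℕ, n = i * x + j * y}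

/-- The enumerating function of a set `S ⊆ ℕ`: `enumFun S n` is the `(n+1)`-st smallest
element of `S` (0-indexed `n`-th element). -/
noncomputable def enumFun (S : Set ℕ) : ℕ → ℕ := Nat.nth (· ∈ S)

/-!
Below `r·qp` and `q·r(p+2)`, every element of `S' = ⟨qp, r(p+2)⟩` is uniquely
`i·qp + j·r(p+2) = p(iq + jr) + 2jr` with `i < r`, `j < q`, and `2jr < p`. So comparing it with
`(q-1)·r(p+2)` or `(r-1)·qp` amounts to comparing `iq + jr` with `(q-1)r` or `(r-1)q`, and the ranks
of these two elements in `S'` are the ranks of `(q-1)r` and `(r-1)q` in `T = ⟨q, r⟩`. Both lie above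
the conductor of `T`, so these ranks are `(q-1)r - δ_T` and `(r-1)q - δ_T`, and Sylvester's formula
`2δ_T = (q-1)(r-1)` (the map `n ↦ qr - q - r - n` exchanges gaps and elements below the conductor)
turns them into `δ_T + q - 1` and `δ_T + r - 1`.
-/

open Finset
open scoped Classical

section Gen2

variable {x y : ℕ}

lemma gen2_comm (x y : ℕ) : gen2 x y = gen2 y x := by
  ext n
  exact ⟨fun ⟨i, j, h⟩ => ⟨j, i, by omega⟩, fun ⟨i, j, h⟩ => ⟨j, i, by omega⟩⟩

lemma mem_gen2_iff_mem_closure {n : ℕ} : n ∈ gen2 x y ↔ n ∈ AddSubmonoid.closure {x, y} := by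
  simp only [AddSubmonoid.mem_closure_pair, smul_eq_mul, gen2, Set.mem_ofPred_eq, eq_comm]

lemma gen2_add_mem {m n : ℕ} (hm : m ∈ gen2 x y) (hn : n ∈ gen2 x y) : m + n ∈ gen2 x y := by
  rw [mem_gen2_iff_mem_closure] at *
  exact add_mem hm hn

lemma sub_sub_add_one_eq_sub_one_mul_sub_one (hx : 1 < x) (hy : 1 < y) :
    x * y - x - y + 1 = (x - 1) * (y - 1) := by
  obtain ⟨a, rfl⟩ : ∃ a, x = a + 1 := ⟨x - 1, by omega⟩
  obtain ⟨b, rfl⟩ : ∃ b, y = b + 1 := ⟨y - 1, by omega⟩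
  have hab : 1 ≤ a * b := Nat.mul_pos (by omega) (by omega)
  have h : (a + 1) * (b + 1) = a * b + a + b + 1 := by ring
  simp only [Nat.add_sub_cancel]
  omega

lemma frobenius_not_mem_gen2 (hxy : x.Coprime y) (hx : 1 < x) (hy : 1 < y) :
    x * y - x - y ∉ gen2 x y := by
  rw [mem_gen2_iff_mem_closure]
  exact (frobeniusNumber_iff.mp (frobeniusNumber_pair hxy hx hy)).1

lemma mem_gen2_of_sub_one_mul_sub_one_le (hxy : x.Coprime y) (hx : 1 < x) (hy : 1 < y) {n : ℕ}
    (hn : (x - 1) * (y - 1) ≤ n) : n ∈ gen2 x y := by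
  rw [mem_gen2_iff_mem_closure]
  refine (frobeniusNumber_iff.mp (frobeniusNumber_pair hxy hx hy)).2 n ?_
  have := sub_sub_add_one_eq_sub_one_mul_sub_one hx hy
  omega

lemma compl_gen2_subset_Iio (hxy : x.Coprime y) (hx : 1 < x) (hy : 1 < y) :
    (gen2 x y)ᶜ ⊆ Set.Iio ((x - 1) * (y - 1)) := fun _ hn =>
  Set.mem_Iio.mpr (not_le.mp fun h => hn (mem_gen2_of_sub_one_mul_sub_one_le hxy hx hy h))

lemma ncard_compl_gen2_eq_count (hxy : x.Coprime y) (hx : 1 < x) (hy : 1 < y) {M : ℕ}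
    (hM : (x - 1) * (y - 1) ≤ M) : (gen2 x y)ᶜ.ncard = Nat.count (· ∉ gen2 x y) M := by
  rw [Nat.count_eq_card_filter_range, ← Set.ncard_coe_finset]
  congr 1
  ext n
  simp only [coe_filter, mem_range, Set.mem_ofPred_eq, Set.mem_compl_iff, iff_and_self]
  exact fun hn => (compl_gen2_subset_Iio hxy hx hy hn).trans_le hM

lemma count_gen2_add_ncard_compl (hxy : x.Coprime y) (hx : 1 < x) (hy : 1 < y) {M : ℕ}
    (hM : (x - 1) * (y - 1) ≤ M) : Nat.count (· ∈ gen2 x y) M + (gen2 x y)ᶜ.ncard = M := by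
  rw [ncard_compl_gen2_eq_count hxy hx hy hM, Nat.count_eq_card_filter_range,
    Nat.count_eq_card_filter_range, card_filter_add_card_filter_not, card_range]

lemma frobenius_sub_mem_gen2_of_not_mem (hxy : x.Coprime y) (hy : 0 < y) {n : ℕ}
    (hn : n ≤ x * y - x - y) (hns : n ∉ gen2 x y) : x * y - x - y - n ∈ gen2 x y := by
  obtain ⟨i, hi, hmod⟩ := Nat.exists_mul_mod_eq_of_coprime n hxy hy.ne'
  have hlt : n < x * i := by
    by_contra! hle
    obtain ⟨k, hk⟩ := (Nat.modEq_iff_dvd' hle).mp hmod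
    exact hns ⟨i, k, by rw [mul_comm i, mul_comm k]; omega⟩
  obtain ⟨k, hk⟩ := (Nat.modEq_iff_dvd' hlt.le).mp hmod.symm
  obtain ⟨i', rfl⟩ : ∃ i', y = i + 1 + i' := ⟨y - 1 - i, by omega⟩
  have hk0 : k ≠ 0 := by rintro rfl; omega
  obtain ⟨k', rfl⟩ : ∃ k', k = k' + 1 := ⟨k - 1, by omega⟩
  refine ⟨i', k', ?_⟩
  have hx_mul : x * (i + 1 + i') = x * i + x + i' * x := by ring
  have hy_mul : (i + 1 + i') * (k' + 1) = k' * (i + 1 + i') + (i + 1 + i') := by ring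
  omega

lemma two_mul_ncard_compl_gen2 (hxy : x.Coprime y) (hx : 1 < x) (hy : 1 < y) :
    2 * (gen2 x y)ᶜ.ncard = (x - 1) * (y - 1) := by
  set F := x * y - x - y
  have hF : F + 1 = (x - 1) * (y - 1) := sub_sub_add_one_eq_sub_one_mul_sub_one hx hy
  have hsum := count_gen2_add_ncard_compl hxy hx hy le_rfl
  have hsymm : Nat.count (· ∉ gen2 x y) (F + 1) = Nat.count (· ∈ gen2 x y) (F + 1) := by
    simp only [Nat.count_eq_card_filter_range]
    refine card_nbij' (F - ·) (F - ·) ?_ ?_ ?_ ?_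
    · intro n hn
      simp only [coe_filter, mem_range, Set.mem_ofPred_eq] at hn ⊢
      exact ⟨by omega, frobenius_sub_mem_gen2_of_not_mem hxy (by omega) (by omega) hn.2⟩
    · intro n hn
      simp only [coe_filter, mem_range, Set.mem_ofPred_eq] at hn ⊢
      refine ⟨by omega, fun hF' => frobenius_not_mem_gen2 hxy hx hy ?_⟩
      convert gen2_add_mem hn.2 hF' using 1
      omega
    · intro n hn
      simp only [coe_filter, mem_range, Set.mem_ofPred_eq] at hn ⊢
      omega
    · intro n hn
      simp only [coe_filter, mem_range, Set.mem_ofPred_eq] at hn ⊢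
      omega
  rw [← hF] at hsum
  rw [ncard_compl_gen2_eq_count hxy hx hy hF.ge] at hsum ⊢
  omega

lemma count_gen2_sub_one_mul (hxy : x.Coprime y) (hx : 1 < x) (hy : 1 < y) :
    Nat.count (· ∈ gen2 x y) ((x - 1) * y) = (gen2 x y)ᶜ.ncard + x - 1 := by
  have hxy' : (x - 1) * y = (x - 1) * (y - 1) + (x - 1) := by
    rw [← Nat.mul_add_one, Nat.sub_add_cancel hy.le]
  have hsum := count_gen2_add_ncard_compl hxy hx hy (M := (x - 1) * y) (by omega)
  have := two_mul_ncard_compl_gen2 hxy hx hy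
  omega

lemma eq_and_eq_of_mul_add_mul_eq (hxy : x.Coprime y) {i j i' j' : ℕ} (hi : i < y) (hi' : i' < y)
    (h : i * x + j * y = i' * x + j' * y) : i = i' ∧ j = j' := by
  have hmod : x * i ≡ x * i' [MOD y] := by
    simpa [Nat.ModEq, Nat.add_mul_mod_self_right, mul_comm x] using congrArg (· % y) h
  have hii : i = i' := Nat.ModEq.eq_of_lt_of_lt (Nat.ModEq.cancel_left_of_coprime
    (by rwa [Nat.gcd_comm]) hmod) hi hi'
  subst hii
  exact ⟨rfl, Nat.eq_of_mul_eq_mul_right (m := y) (by omega) (by omega)⟩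

lemma count_gen2_eq_card_filter_pairs {m n M : ℕ} (hxy : x.Coprime y) (hm : m ≤ y)
    (hMx : M ≤ m * x) (hMy : M ≤ n * y) :
    Nat.count (· ∈ gen2 x y) M = #{ij ∈ range m ×ˢ range n | ij.1 * x + ij.2 * y < M} := by
  rw [Nat.count_eq_card_filter_range]
  symm
  refine card_nbij (fun ij => ij.1 * x + ij.2 * y) ?_ ?_ ?_
  · rintro ⟨i, j⟩ hij
    simp only [coe_filter, mem_product, mem_range, Set.mem_ofPred_eq] at hij ⊢
    exact ⟨hij.2, i, j, rfl⟩
  · rintro ⟨i, j⟩ hij ⟨i', j'⟩ hij' h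
    simp only [coe_filter, mem_product, mem_range, Set.mem_ofPred_eq] at hij hij'
    obtain ⟨rfl, rfl⟩ := eq_and_eq_of_mul_add_mul_eq hxy (by omega) (by omega) h
    rfl
  · rintro k hk
    simp only [coe_filter, mem_range, Set.mem_ofPred_eq] at hk
    obtain ⟨hkM, i, j, rfl⟩ := hk
    have hi : i < m := Nat.lt_of_mul_lt_mul_right (a := x) (by omega)
    have hj : j < n := Nat.lt_of_mul_lt_mul_right (a := y) (by omega)
    exact ⟨(i, j), by simp [hi, hj, hkM], rfl⟩

end Gen2

lemma mul_add_lt_mul_add_iff {p s t N u : ℕ} (ht : t < p) (hu : u < p) :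
    p * s + t < p * N + u ↔ s < N ∨ s = N ∧ t < u := by
  rcases lt_trichotomy s N with h | rfl | h
  · have : p * (s + 1) ≤ p * N := Nat.mul_le_mul_left p h
    simp only [h, true_or, iff_true]
    nlinarith
  · simp
  · have : p * (N + 1) ≤ p * s := Nat.mul_le_mul_left p h
    simp only [h.not_gt, h.ne', false_or, false_and, iff_false, not_lt]
    nlinarith

section Scaled

variable {q r p : ℕ}

lemma coprime_mul_mul_add_two (hqr : q.Coprime r) (hp : p.Coprime (2 * q * r))
    (hp2 : (p + 2).Coprime (2 * q * r)) : (q * p).Coprime (r * (p + 2)) := by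
  have hq : q.Coprime (p + 2) := (hp2.coprime_dvd_right ⟨2 * r, by ring⟩).symm
  have hpr : p.Coprime r := hp.coprime_dvd_right ⟨2 * q, by ring⟩
  have hpp : p.Coprime (p + 2) :=
    Nat.coprime_self_add_right.mpr (hp.coprime_dvd_right ⟨q * r, by ring⟩)
  exact (hqr.mul_right hq).mul_left (hpr.mul_right hpp)

lemma two_mul_mul_lt_of_lt (hr : 0 < r) (hpqr : 2 * q * r ≤ p + 1) {j : ℕ} (hj : j < q) :
    2 * (j * r) < p := by
  have h1 : j * r + r ≤ q * r := by
    rw [← add_one_mul]; exact Nat.mul_le_mul_right r (hj : j + 1 ≤ q)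
  have h2 : 2 * q * r = 2 * (q * r) := by ring
  omega

lemma count_gen2_sub_one_mul_snd (hqr : q.Coprime r) (hq : 0 < q) (hr : 0 < r)
    (hpqr : 2 * q * r ≤ p + 1) (hab : (q * p).Coprime (r * (p + 2))) :
    Nat.count (· ∈ gen2 (q * p) (r * (p + 2))) ((q - 1) * (r * (p + 2)))
      = Nat.count (· ∈ gen2 q r) ((q - 1) * r) := by
  have hq2 : 2 * q ≤ p + 2 := by nlinarith
  rw [count_gen2_eq_card_filter_pairs (m := r) (n := q) hab (Nat.le_mul_of_pos_right r (by omega))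
      ?_ (Nat.mul_le_mul_right _ (Nat.sub_le q 1)),
    count_gen2_eq_card_filter_pairs (m := r) (n := q) hqr le_rfl
      (by rw [mul_comm r]; exact Nat.mul_le_mul_right _ (Nat.sub_le q 1))
      (Nat.mul_le_mul_right _ (Nat.sub_le q 1))]
  · refine congrArg card (filter_congr fun ⟨i, j⟩ hij => ?_)
    simp only [mem_product, mem_range] at hij
    rw [show i * (q * p) + j * (r * (p + 2)) = p * (i * q + j * r) + 2 * (j * r) by ring,
      show (q - 1) * (r * (p + 2)) = p * ((q - 1) * r) + 2 * ((q - 1) * r) by ring,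
      mul_add_lt_mul_add_iff (two_mul_mul_lt_of_lt hr hpqr hij.2)
        (two_mul_mul_lt_of_lt hr hpqr (Nat.sub_one_lt_of_lt hq))]
    refine or_iff_left_of_imp fun ⟨hs, hlt⟩ => ?_
    -- `(q - 1) * r` has the unique representation `0 * q + (q - 1) * r`
    obtain ⟨-, rfl⟩ := eq_and_eq_of_mul_add_mul_eq hqr hij.1 hr
      (by rw [hs, zero_mul, zero_add])
    exact absurd hlt (lt_irrefl _)
  · calc (q - 1) * (r * (p + 2)) = r * ((q - 1) * (p + 2)) := by ring
      _ ≤ r * (q * p) := Nat.mul_le_mul_left r (by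
        zify [hq]
        nlinarith)

lemma count_gen2_sub_one_mul_fst (hqr : q.Coprime r) (hr : 0 < r) (hpqr : 2 * q * r ≤ p + 1)
    (hab : (q * p).Coprime (r * (p + 2))) :
    Nat.count (· ∈ gen2 (q * p) (r * (p + 2))) ((r - 1) * (q * p))
      = Nat.count (· ∈ gen2 q r) ((r - 1) * q) := by
  rw [count_gen2_eq_card_filter_pairs (m := r) (n := q) hab (Nat.le_mul_of_pos_right r (by omega))
      (Nat.mul_le_mul_right _ (Nat.sub_le r 1)) ?_,
    count_gen2_eq_card_filter_pairs (m := r) (n := q) hqr le_rfl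
      (Nat.mul_le_mul_right _ (Nat.sub_le r 1))
      (by rw [mul_comm q]; exact Nat.mul_le_mul_right _ (Nat.sub_le r 1))]
  · refine congrArg card (filter_congr fun ⟨i, j⟩ hij => ?_)
    simp only [mem_product, mem_range] at hij
    have ht := two_mul_mul_lt_of_lt hr hpqr hij.2
    rw [show i * (q * p) + j * (r * (p + 2)) = p * (i * q + j * r) + 2 * (j * r) by ring,
      show (r - 1) * (q * p) = p * ((r - 1) * q) + 0 by ring,
      mul_add_lt_mul_add_iff ht (by omega)]
    simp
  · calc (r - 1) * (q * p) ≤ r * (q * p) := Nat.mul_le_mul_right _ (Nat.sub_le r 1)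
      _ ≤ q * (r * (p + 2)) := by nlinarith

end Scaled

/-- For `2 ≤ q < r` coprime, `p ≥ 2qr − 1` with `gcd(p, 2qr) = gcd(p+2, 2qr) = 1`,
`δ_T = #(ℕ \ ⟨q,r⟩)` and `S' = ⟨qp, r(p+2)⟩`: `S'` is cofinite,
`Γ_{S'}(δ_T + q − 1) = (q−1)r(p+2)` and `Γ_{S'}(δ_T + r − 1) = (r−1)qp`. -/
theorem stmt12 (q r p : ℕ) (hq : 2 ≤ q) (hqr : q < r) (hcop : Nat.gcd q r = 1)
    (hp : 2 * q * r - 1 ≤ p) (hp1 : Nat.gcd p (2 * q * r) = 1)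
    (hp2 : Nat.gcd (p + 2) (2 * q * r) = 1) :
    ((gen2 (q * p) (r * (p + 2)))ᶜ).Finite ∧
    enumFun (gen2 (q * p) (r * (p + 2))) (((gen2 q r)ᶜ).ncard + q - 1)
      = (q - 1) * (r * (p + 2)) ∧
    enumFun (gen2 (q * p) (r * (p + 2))) (((gen2 q r)ᶜ).ncard + r - 1)
      = (r - 1) * (q * p) := by
  have hcop : q.Coprime r := hcop
  have hpqr : 2 * q * r ≤ p + 1 := by omega
  have hab := coprime_mul_mul_add_two hcop hp1 hp2
  have hqp : 1 < q * p := by nlinarith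
  have hrp : 1 < r * (p + 2) := by nlinarith
  refine ⟨(Set.finite_Iio _).subset (compl_gen2_subset_Iio hab hqp hrp), ?_, ?_⟩
  · rw [← count_gen2_sub_one_mul hcop (by omega) (by omega),
      ← count_gen2_sub_one_mul_snd hcop (by omega) (by omega) hpqr hab]
    exact Nat.nth_count ⟨0, q - 1, by ring⟩
  · rw [gen2_comm q r, ← count_gen2_sub_one_mul hcop.symm (by omega) (by omega), gen2_comm r q,
      ← count_gen2_sub_one_mul_fst hcop (by omega) hpqr hab]
    exact Nat.nth_count ⟨r - 1, 0, by ring⟩
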